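/- Let v : {1,…,l} × {1,…,l} → [0,∞) with v(i,i) = 0, and for each i define w_i as the minimum over all oriented spanning trees g rooted at i (edges oriented from child to parent on the vertex set {1,…,l}) of κ(g) = Σ_{(m,n)∈g} v(m,n). Then for all i ≠ j, w_i ≤ w_j + v(j,i). -/
import Mathlib


theorem stmt_9 (l : ℕ) (v : Fin l → Fin l → ℝ)
    (hv : ∀ i j, 0 ≤ v i j) (hvd : ∀ i, v i i = 0)
    (w : Fin l → ℝ)
    (hw : ∀ i : Fin l, IsLeast
      { x : ℝ | ∃ g : Fin l → Fin l, g i = i ∧ (∀ m, ∃ n : ℕ, g^[n] m = i) ∧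
        x = ∑ m ∈ Finset.univ.filter (fun m => m ≠ i), v m (g m) } (w i)) :
    ∀ i j : Fin l, i ≠ j → w i ≤ w j + v j i := by
  classical
  intro i j hij
  obtain ⟨⟨g, hgj, hreach, hsum⟩, _⟩ := hw j
  set g' : Fin l → Fin l := fun m => if m = i then i else if m = j then i else g m
    with hg'def
  have hg'i : g' i = i := by simp [hg'def]
  have hg'j : g' j = i := by simp [hg'def, hij.symm]
  have hg'other : ∀ m, m ≠ i → m ≠ j → g' m = g m := by
    intro m h1 h2; simp [hg'def, h1, h2]
  have hreach' : ∀ m, ∃ n, g'^[n] m = i := by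
    intro m
    obtain ⟨n, hn⟩ := hreach m
    clear hsum
    induction n generalizing m with
    | zero =>
        simp only [Function.iterate_zero, id] at hn
        exact ⟨1, by simp [hn, hg'j]⟩
    | succ n ih =>
        by_cases h1 : m = i
        · exact ⟨0, by simp [h1]⟩
        by_cases h2 : m = j
        · exact ⟨1, by simp [h2, hg'j]⟩
        obtain ⟨k, hk⟩ := ih (g m) (by rwa [Function.iterate_succ_apply] at hn)
        exact ⟨k + 1, by rw [Function.iterate_succ_apply, hg'other m h1 h2]; exact hk⟩
  have hmem : (∑ m ∈ Finset.univ.filter (fun m => m ≠ i), v m (g' m)) ∈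
      { x : ℝ | ∃ g : Fin l → Fin l, g i = i ∧ (∀ m, ∃ n : ℕ, g^[n] m = i) ∧
        x = ∑ m ∈ Finset.univ.filter (fun m => m ≠ i), v m (g m) } :=
    ⟨g', hg'i, hreach', rfl⟩
  have hle := (hw i).2 hmem
  -- now bound the sum
  have hjmem : j ∈ Finset.univ.filter (fun m => m ≠ i) := by simp [hij.symm]
  have himem : i ∈ Finset.univ.filter (fun m => m ≠ j) := by simp [hij]
  have heq : (Finset.univ.filter (fun m => m ≠ i)).erase j
      = ((Finset.univ.filter (fun m => m ≠ j)).erase i : Finset (Fin l)) := by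
    ext m; simp only [Finset.mem_erase, Finset.mem_filter, Finset.mem_univ, true_and]
    tauto
  have h1 : (∑ m ∈ Finset.univ.filter (fun m => m ≠ i), v m (g' m))
      = v j (g' j) + ∑ m ∈ (Finset.univ.filter (fun m => m ≠ i)).erase j, v m (g' m) :=
    (Finset.add_sum_erase _ _ hjmem).symm
  have h2 : (∑ m ∈ Finset.univ.filter (fun m => m ≠ j), v m (g m))
      = v i (g i) + ∑ m ∈ (Finset.univ.filter (fun m => m ≠ j)).erase i, v m (g m) :=
    (Finset.add_sum_erase _ _ himem).symm
  have h3 : ∑ m ∈ (Finset.univ.filter (fun m => m ≠ i)).erase j, v m (g' m)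
      = ∑ m ∈ (Finset.univ.filter (fun m => m ≠ j)).erase i, v m (g m) := by
    rw [heq]
    refine Finset.sum_congr rfl ?_
    intro m hm
    simp only [Finset.mem_erase, Finset.mem_filter, Finset.mem_univ, true_and] at hm
    rw [hg'other m hm.1 hm.2]
  have hvi : 0 ≤ v i (g i) := hv _ _
  rw [h1, hg'j, h3] at hle
  rw [h2] at hsum
  linarith
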